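/- arXiv:math-ph/0204011 — 6 statements merged into one kernel-verified Lean document; each statement's English description precedes it below -/
import Mathlib

section
/- Let Δ > 1, A = sqrt(1 - Δ^{-2}), and let B₁, B₃ be real with B₁ ≠ 0. The 4×4 real symmetric matrix M = [[B₃, 0, B₁, 0], [0, 1-A+B₃, -Δ^{-1}, B₁], [B₁, -Δ^{-1}, 1+A-B₃, 0], [0, B₁, 0, -B₃]] has characteristic polynomial p(t) = (t² - 2t - B₁² - B₃² + 2B₃A)(t² - B₁² - B₃²), hence its eigenvalues are ±sqrt(B₁²+B₃²) and 1 ± sqrt(1 + B₁² + B₃² - 2B₃A). -/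
open Matrix

/-!
Expanding `det (t • 1 - M)` along the first row and using `A² + Δ⁻² = 1` gives the
factorisation. Each factor is a difference of squares, `t² - (B₁² + B₃²)` and
`(t - 1)² - (B₁² + (B₃ - A)² + Δ⁻²)`, with nonnegative radicands, which yields the four roots.
-/

/-- Twice the two-site spin-1/2 kink Hamiltonian with field `(B₁,0,B₃)` at site 1. -/
noncomputable def kinkM (Δ B1 B3 : ℝ) : Matrix (Fin 4) (Fin 4) ℝ :=
  !![B3, 0, B1, 0;
     0, 1 - Real.sqrt (1 - Δ⁻¹^2) + B3, -Δ⁻¹, B1;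
     B1, -Δ⁻¹, 1 + Real.sqrt (1 - Δ⁻¹^2) - B3, 0;
     0, B1, 0, -B3]

theorem det_fin_four {R : Type*} [CommRing R] (a b c d e f g h i j k l m n o p : R) :
    det !![a, b, c, d; e, f, g, h; i, j, k, l; m, n, o, p] =
      a * (f * (k * p - l * o) - g * (j * p - l * n) + h * (j * o - k * n))
      - b * (e * (k * p - l * o) - g * (i * p - l * m) + h * (i * o - k * m))
      + c * (e * (j * p - l * n) - f * (i * p - l * m) + h * (i * n - j * m))
      - d * (e * (j * o - k * n) - f * (i * o - k * m) + g * (i * n - j * m)) := by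
  simp [det_succ_row_zero, Fin.sum_univ_succ, Fin.succAbove]
  ring

/-- The entries `A = √(1 - Δ⁻²)` and `Δ⁻¹` of `kinkM` enter the spectrum only through
`A² + Δ⁻² = 1`, so they are kept as free parameters `a` and `d`. -/
def kinkMatrix (a d B1 B3 : ℝ) : Matrix (Fin 4) (Fin 4) ℝ :=
  !![B3, 0, B1, 0;
     0, 1 - a + B3, -d, B1;
     B1, -d, 1 + a - B3, 0;
     0, B1, 0, -B3]

theorem kinkM_eq_kinkMatrix (Δ B1 B3 : ℝ) :
    kinkM Δ B1 B3 = kinkMatrix (Real.sqrt (1 - Δ⁻¹ ^ 2)) Δ⁻¹ B1 B3 := rfl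

theorem det_smul_one_sub_kinkMatrix {a d : ℝ} (had : a ^ 2 + d ^ 2 = 1) (B1 B3 t : ℝ) :
    det (t • (1 : Matrix (Fin 4) (Fin 4) ℝ) - kinkMatrix a d B1 B3) =
      (t ^ 2 - 2 * t - B1 ^ 2 - B3 ^ 2 + 2 * B3 * a) * (t ^ 2 - B1 ^ 2 - B3 ^ 2) := by
  have hchar : t • (1 : Matrix (Fin 4) (Fin 4) ℝ) - kinkMatrix a d B1 B3 =
      !![t - B3, 0, -B1, 0;
         0, t - (1 - a + B3), d, -B1;
         -B1, d, t - (1 + a - B3), 0;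
         0, -B1, 0, t + B3] := by
    ext i j
    fin_cases i <;> fin_cases j <;> simp [kinkMatrix]
  rw [hchar, det_fin_four]
  linear_combination (B3 ^ 2 - t ^ 2) * had

theorem sqrt_one_sub_sq_sq_add_sq {x : ℝ} (hx : x ^ 2 ≤ 1) :
    Real.sqrt (1 - x ^ 2) ^ 2 + x ^ 2 = 1 := by
  rw [Real.sq_sqrt (sub_nonneg.2 hx), sub_add_cancel]

theorem sq_sub_eq_zero_iff {x c : ℝ} (hc : 0 ≤ c) : x ^ 2 - c = 0 ↔ x = √c ∨ x = -√c := by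
  rw [sub_eq_zero, ← sq_eq_sq_iff_eq_or_eq_neg, Real.sq_sqrt hc]

theorem stmt4_general (Δ B1 B3 : ℝ) (hΔ : 1 < Δ) :
    (∀ t : ℝ,
      det (t • (1 : Matrix (Fin 4) (Fin 4) ℝ) - kinkM Δ B1 B3) =
        (t^2 - 2*t - B1^2 - B3^2 + 2*B3*Real.sqrt (1 - Δ⁻¹^2)) * (t^2 - B1^2 - B3^2)) ∧
    (∀ t : ℝ,
      det (t • (1 : Matrix (Fin 4) (Fin 4) ℝ) - kinkM Δ B1 B3) = 0 ↔
        t = Real.sqrt (B1^2 + B3^2) ∨ t = -Real.sqrt (B1^2 + B3^2) ∨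
        t = 1 + Real.sqrt (1 + B1^2 + B3^2 - 2*B3*Real.sqrt (1 - Δ⁻¹^2)) ∨
        t = 1 - Real.sqrt (1 + B1^2 + B3^2 - 2*B3*Real.sqrt (1 - Δ⁻¹^2))) := by
  set A := Real.sqrt (1 - Δ⁻¹ ^ 2)
  have hA : A ^ 2 + Δ⁻¹ ^ 2 = 1 :=
    sqrt_one_sub_sq_sq_add_sq (pow_le_one₀ (by positivity) (inv_le_one_of_one_le₀ hΔ.le))
  have hdet := det_smul_one_sub_kinkMatrix hA B1 B3
  refine ⟨hdet, fun t => ?_⟩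
  have hrad : 0 ≤ 1 + B1 ^ 2 + B3 ^ 2 - 2 * B3 * A := by
    have : 1 + B1 ^ 2 + B3 ^ 2 - 2 * B3 * A = B1 ^ 2 + (B3 - A) ^ 2 + Δ⁻¹ ^ 2 := by
      linear_combination -hA
    rw [this]
    positivity
  have hquad : t ^ 2 - 2 * t - B1 ^ 2 - B3 ^ 2 + 2 * B3 * A
      = (t - 1) ^ 2 - (1 + B1 ^ 2 + B3 ^ 2 - 2 * B3 * A) := by ring
  rw [kinkM_eq_kinkMatrix, hdet, mul_eq_zero, hquad, sq_sub_eq_zero_iff hrad,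
    sub_sub, sq_sub_eq_zero_iff (by positivity), sub_eq_iff_eq_add', sub_eq_iff_eq_add',
    ← sub_eq_add_neg]
  tauto

/-- The matrix `M = 2H^{+-}_{[1,2]}(B₁,0,B₃)` has characteristic polynomial
`p(t) = (t² - 2t - B₁² - B₃² + 2B₃A)(t² - B₁² - B₃²)`, hence its eigenvalues are
`±√(B₁²+B₃²)` and `1 ± √(1 + B₁² + B₃² - 2B₃A)`. -/
theorem stmt4 (Δ B1 B3 : ℝ) (hΔ : 1 < Δ) (hB1 : B1 ≠ 0) :
    (∀ t : ℝ,
      det (t • (1 : Matrix (Fin 4) (Fin 4) ℝ) - kinkM Δ B1 B3) =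
        (t^2 - 2*t - B1^2 - B3^2 + 2*B3*Real.sqrt (1 - Δ⁻¹^2)) * (t^2 - B1^2 - B3^2)) ∧
    (∀ t : ℝ,
      det (t • (1 : Matrix (Fin 4) (Fin 4) ℝ) - kinkM Δ B1 B3) = 0 ↔
        t = Real.sqrt (B1^2 + B3^2) ∨ t = -Real.sqrt (B1^2 + B3^2) ∨
        t = 1 + Real.sqrt (1 + B1^2 + B3^2 - 2*B3*Real.sqrt (1 - Δ⁻¹^2)) ∨
        t = 1 - Real.sqrt (1 + B1^2 + B3^2 - 2*B3*Real.sqrt (1 - Δ⁻¹^2))) :=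
  stmt4_general Δ B1 B3 hΔ
end

section
/- Let Δ > 1, A = sqrt(1-Δ^{-2}), and B₁, B₃ real. Then sqrt(B₁² + B₃²) ≥ 1 - sqrt(1 + B₁² + B₃² - 2B₃A). Consequently the minimal eigenvalue of the two-site kink Hamiltonian with field is -½sqrt(B₁²+B₃²) (after the factor-2 normalization), and the spectral gap equals g = ½ - ½sqrt(1 + B₁² + B₃² - 2B₃A) + ½sqrt(B₁²+B₃²), which is strictly positive when B₁ ≠ 0. -/
/-- For `Δ > 1`, `A = √(1-Δ⁻²)`, and real `B₁, B₃`: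
`√(B₁²+B₃²) ≥ 1 - √(1 + B₁² + B₃² - 2B₃A)`; consequently `-½√(B₁²+B₃²)` is the
minimum of the four eigenvalues `±½√(B₁²+B₃²)`, `½(1 ± √(1+B₁²+B₃²-2B₃A))` of the
two-site kink Hamiltonian, the spectral gap (second lowest minus lowest eigenvalue)
equals `g = ½ - ½√(1+B₁²+B₃²-2B₃A) + ½√(B₁²+B₃²)`, and `g > 0` when `B₁ ≠ 0`. -/
theorem stmt5 (Δ B1 B3 : ℝ) (hΔ : 1 < Δ) :
    Real.sqrt (B1^2 + B3^2) ≥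
        1 - Real.sqrt (1 + B1^2 + B3^2 - 2*B3*Real.sqrt (1 - Δ⁻¹^2)) ∧
    (-(1/2) * Real.sqrt (B1^2 + B3^2)
        = min (min (-(1/2) * Real.sqrt (B1^2 + B3^2)) ((1/2) * Real.sqrt (B1^2 + B3^2)))
            (min ((1 - Real.sqrt (1 + B1^2 + B3^2 - 2*B3*Real.sqrt (1 - Δ⁻¹^2)))/2)
                 ((1 + Real.sqrt (1 + B1^2 + B3^2 - 2*B3*Real.sqrt (1 - Δ⁻¹^2)))/2))) ∧
    (1/2 - (1/2) * Real.sqrt (1 + B1^2 + B3^2 - 2*B3*Real.sqrt (1 - Δ⁻¹^2))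
        + (1/2) * Real.sqrt (B1^2 + B3^2)
      = min ((1/2) * Real.sqrt (B1^2 + B3^2))
            (min ((1 - Real.sqrt (1 + B1^2 + B3^2 - 2*B3*Real.sqrt (1 - Δ⁻¹^2)))/2)
                 ((1 + Real.sqrt (1 + B1^2 + B3^2 - 2*B3*Real.sqrt (1 - Δ⁻¹^2)))/2))
        - (-(1/2) * Real.sqrt (B1^2 + B3^2))) ∧
    (B1 ≠ 0 →
      0 < 1/2 - (1/2) * Real.sqrt (1 + B1^2 + B3^2 - 2*B3*Real.sqrt (1 - Δ⁻¹^2))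
            + (1/2) * Real.sqrt (B1^2 + B3^2)) := by

  have hΔ0 : (0:ℝ) < Δ := lt_trans one_pos hΔ
  have hinv : Δ⁻¹ < 1 := inv_lt_one_of_one_lt₀ hΔ
  have hinv0 : 0 < Δ⁻¹ := inv_pos.mpr hΔ0
  have h0 : (0:ℝ) ≤ 1 - Δ⁻¹^2 := by nlinarith
  set A := Real.sqrt (1 - Δ⁻¹^2) with hAdef
  have hA0 : 0 ≤ A := Real.sqrt_nonneg _
  have hA2 : A^2 = 1 - Δ⁻¹^2 := Real.sq_sqrt h0
  have hA1 : A < 1 := by nlinarith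
  set S := Real.sqrt (B1^2 + B3^2) with hSdef
  have hS0 : 0 ≤ S := Real.sqrt_nonneg _
  have hS2 : S^2 = B1^2 + B3^2 := Real.sq_sqrt (by positivity)
  have hB3S : B3 ≤ S := by nlinarith [sq_nonneg B1]
  have hB3S' : -S ≤ B3 := by nlinarith [sq_nonneg B1]
  have hE : (0:ℝ) ≤ 1 + B1^2 + B3^2 - 2*B3*A := by nlinarith [sq_nonneg (B3 - A)]
  set R := Real.sqrt (1 + B1^2 + B3^2 - 2*B3*A) with hRdef
  have hR0 : 0 ≤ R := Real.sqrt_nonneg _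
  have hR2 : R^2 = 1 + B1^2 + B3^2 - 2*B3*A := Real.sq_sqrt hE
  have key1 : 1 - R ≤ S := by
    rcases le_or_gt S 1 with h | h
    · nlinarith
    · linarith
  have key2 : R ≤ 1 + S := by nlinarith
  refine ⟨by linarith, ?_, ?_, ?_⟩
  · rw [min_eq_left (by linarith : (1 - R)/2 ≤ (1 + R)/2),
        min_eq_left (by linarith : -(1/2)*S ≤ (1/2)*S),
        min_eq_left (by linarith : -(1/2)*S ≤ (1 - R)/2)]
  · rw [min_eq_left (by linarith : (1 - R)/2 ≤ (1 + R)/2),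
        min_eq_right (by linarith : (1 - R)/2 ≤ (1/2)*S)]
    ring
  · intro hB1
    have hSpos : 0 < S := by nlinarith [sq_nonneg B3, sq_pos_of_ne_zero hB1]
    have h1 : -S*A ≤ B3*A := mul_le_mul_of_nonneg_right hB3S' hA0
    have h2 : 0 < S*(1-A) := mul_pos hSpos (by linarith)
    have e : (1+S)^2 - R^2 = 2*S + 2*(B3*A) := by linear_combination hS2 - hR2
    have h3 : R^2 < (1+S)^2 := by linarith
    have : R < 1 + S := lt_of_pow_lt_pow_left₀ 2 (by linarith) h3
    linarith
end

section
/- Let Δ > 1, A = sqrt(1-Δ^{-2}), B₁, B₃ real. The 4×4 matrix N = [[B₃-A, 0, B₁, 0], [0, 1+B₃, -Δ^{-1}, B₁], [B₁, -Δ^{-1}, 1-B₃, 0], [0, B₁, 0, A-B₃]] has characteristic polynomial q(t) = (t² - 2t - B₁² - B₃² + A²)(t² - B₁² - (B₃-A)²), so its eigenvalues are ±sqrt(B₁² + (B₃-A)²) and 1 ± sqrt(1 + B₁² + B₃² - A²). -/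
/-! Expanding along the first row, the determinant factors as `q(t)` once `A² + Δ⁻² = 1`
is used. Each factor of `q` is a difference of squares, `t² - (B₁² + (B₃ - A)²)` and
`(t - 1)² - (1 + B₁² + B₃² - A²)`, with nonnegative radicands because `A² ≤ 1`. -/

open Matrix

/-- The shifted two-site spin-1/2 droplet Hamiltonian `N = 2H^{++}_{[1,2]}(B₁,0,B₃) - A·I`. -/
noncomputable def dropM (Δ B1 B3 : ℝ) : Matrix (Fin 4) (Fin 4) ℝ :=
  !![B3 - Real.sqrt (1 - Δ⁻¹^2), 0, B1, 0;
     0, 1 + B3, -Δ⁻¹, B1;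
     B1, -Δ⁻¹, 1 - B3, 0;
     0, B1, 0, Real.sqrt (1 - Δ⁻¹^2) - B3]

theorem det_smul_one_sub_of_sq_add_sq_eq_one {a d : ℝ} (had : a^2 + d^2 = 1) (B1 B3 t : ℝ) :
    det (t • (1 : Matrix (Fin 4) (Fin 4) ℝ) -
        !![B3 - a, 0, B1, 0; 0, 1 + B3, -d, B1; B1, -d, 1 - B3, 0; 0, B1, 0, a - B3]) =
      (t^2 - 2*t - B1^2 - B3^2 + a^2) * (t^2 - B1^2 - (B3 - a)^2) := by
  rw [det_succ_row_zero, Fin.sum_univ_four]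
  simp only [det_fin_three, submatrix_apply, Matrix.sub_apply, Matrix.smul_apply, one_apply,
    of_apply, cons_val', cons_val, cons_val_fin_one, Fin.succAbove, Fin.isValue, Fin.reduceSucc,
    Fin.reduceCastSucc, Fin.reduceLT, Fin.reduceEq, ↓reduceIte, Fin.val_zero, Fin.val_one,
    Fin.val_two, smul_eq_mul]
  linear_combination (a^2 - t^2 - 2*B3*a + B3^2) * had

theorem Real.sq_sub_eq_zero_iff {s t : ℝ} (hs : 0 ≤ s) :
    t^2 - s = 0 ↔ t = √s ∨ t = -√s := by
  rw [sub_eq_zero, ← sq_eq_sq_iff_eq_or_eq_neg, Real.sq_sqrt hs]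

/-- The matrix `N` has characteristic polynomial
`q(t) = (t² - 2t - B₁² - B₃² + A²)(t² - B₁² - (B₃-A)²)`, so its eigenvalues are
`±√(B₁² + (B₃-A)²)` and `1 ± √(1 + B₁² + B₃² - A²)`. -/
theorem stmt6 (Δ B1 B3 : ℝ) (hΔ : 1 < Δ) :
    (∀ t : ℝ,
      det (t • (1 : Matrix (Fin 4) (Fin 4) ℝ) - dropM Δ B1 B3) =
        (t^2 - 2*t - B1^2 - B3^2 + Real.sqrt (1 - Δ⁻¹^2)^2) *
          (t^2 - B1^2 - (B3 - Real.sqrt (1 - Δ⁻¹^2))^2)) ∧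
    (∀ t : ℝ,
      det (t • (1 : Matrix (Fin 4) (Fin 4) ℝ) - dropM Δ B1 B3) = 0 ↔
        t = Real.sqrt (B1^2 + (B3 - Real.sqrt (1 - Δ⁻¹^2))^2) ∨
        t = -Real.sqrt (B1^2 + (B3 - Real.sqrt (1 - Δ⁻¹^2))^2) ∨
        t = 1 + Real.sqrt (1 + B1^2 + B3^2 - Real.sqrt (1 - Δ⁻¹^2)^2) ∨
        t = 1 - Real.sqrt (1 + B1^2 + B3^2 - Real.sqrt (1 - Δ⁻¹^2)^2)) := by
  have hd : Δ⁻¹ ^ 2 ≤ 1 := pow_le_one₀ (by positivity) (inv_le_one_of_one_le₀ hΔ.le)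
  set A := √(1 - Δ⁻¹^2)
  have hA : A^2 + Δ⁻¹^2 = 1 := by rw [Real.sq_sqrt (by linarith)]; ring
  have charpoly (t : ℝ) : det (t • (1 : Matrix (Fin 4) (Fin 4) ℝ) - dropM Δ B1 B3) =
      (t^2 - 2*t - B1^2 - B3^2 + A^2) * (t^2 - B1^2 - (B3 - A)^2) :=
    det_smul_one_sub_of_sq_add_sq_eq_one hA B1 B3 t
  refine ⟨charpoly, fun t => ?_⟩
  have outer : t^2 - B1^2 - (B3 - A)^2 = 0 ↔
      t = √(B1^2 + (B3 - A)^2) ∨ t = -√(B1^2 + (B3 - A)^2) := by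
    rw [sub_sub]; exact Real.sq_sub_eq_zero_iff (by positivity)
  have inner : t^2 - 2*t - B1^2 - B3^2 + A^2 = 0 ↔
      t = 1 + √(1 + B1^2 + B3^2 - A^2) ∨ t = 1 - √(1 + B1^2 + B3^2 - A^2) := by
    rw [show t^2 - 2*t - B1^2 - B3^2 + A^2 = (t - 1)^2 - (1 + B1^2 + B3^2 - A^2) by ring,
      Real.sq_sub_eq_zero_iff (by nlinarith), sub_eq_iff_eq_add', sub_eq_iff_eq_add',
      ← sub_eq_add_neg]
  rw [charpoly, mul_eq_zero, outer, inner, or_comm, or_assoc]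
end

section
/- Abstract martingale gap theorem: Let H = Σ_{i=0}^{N} h_i be a sum of nonnegative self-adjoint operators on a finite-dimensional Hilbert space, each with spectral gap at least γ > 0 above its kernel. Let G_Λ denote orthogonal projections onto intersections of kernels as in the martingale setup, and define E₀ = 1 - G_{Λ₀}, E_i = G_{Λ_i} - G_{Λ_{i+1}} for 1 ≤ i < N, E_N = G_{[1,b]}, which are mutually orthogonal projections summing to the identity. Assume ‖G_{C_{i+1}} E_i‖ ≤ ε with 0 ≤ ε < 1/√2 for all 0 ≤ i ≤ N-1, and that E_m commutes with G_{C_n} for m ≤ n-2 and m ≥ n+1. Then for every vector ψ orthogonal to ker H, one has ⟨ψ, Hψ⟩ ≥ γ(1 - √2 ε)² ‖ψ‖². -/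
/-!
Write `aᵢ = ‖Eᵢψ‖` and `cₙ = ‖ψ - Gₙψ‖`. Since `E_N ψ = 0`, `‖ψ‖² = ∑_{i<N} aᵢ²`. For `i < N`,
`aᵢ² = ⟪G_{i+1}Eᵢψ, ψ⟫ + ⟪Eᵢψ, ψ - G_{i+1}ψ⟫`. By the commutation hypothesis every `E_m` with
`m ∉ {i, i+1}` kills `G_{i+1}Eᵢψ`, so in the first term `ψ` may be replaced by `Eᵢψ + E_{i+1}ψ`;
together with `‖G_{i+1}Eᵢψ‖ ≤ ε aᵢ` this gives `aᵢ ≤ ε √(aᵢ² + a_{i+1}²) + c_{i+1}`. Minkowski's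
inequality in `ℓ²` turns these into `‖ψ‖ ≤ √2 ε ‖ψ‖ + (∑_{i<N} c_{i+1}²)^{1/2}`, and the gap
hypothesis bounds `γ ∑_{i<N} c_{i+1}²` by `⟪ψ, Hψ⟫`.
-/

open scoped InnerProductSpace
open Finset

section

variable {𝕜 V : Type*} [RCLike 𝕜] [NormedAddCommGroup V] [InnerProductSpace 𝕜 V]

namespace LinearMap.IsSymmetricProjection

variable {P : V →ₗ[𝕜] V}

theorem re_inner_apply_left (hP : P.IsSymmetricProjection) (x : V) :
    RCLike.re ⟪P x, x⟫_𝕜 = ‖P x‖ ^ 2 := by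
  conv_lhs => rw [← hP.isIdempotentElem]
  rw [Module.End.mul_apply, hP.isSymmetric]
  exact inner_self_eq_norm_sq _

theorem re_inner_apply_right (hP : P.IsSymmetricProjection) (x : V) :
    RCLike.re ⟪x, P x⟫_𝕜 = ‖P x‖ ^ 2 := by
  rw [← hP.isSymmetric, hP.re_inner_apply_left]

theorem norm_sub_apply_sq (hP : P.IsSymmetricProjection) (x : V) :
    ‖x - P x‖ ^ 2 = ‖x‖ ^ 2 - RCLike.re ⟪x, P x⟫_𝕜 := by
  rw [@norm_sub_sq 𝕜, hP.re_inner_apply_right]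
  ring

end LinearMap.IsSymmetricProjection

theorem norm_le_of_inner_apply_eq {P : V →ₗ[𝕜] V} (hP : P.IsSymmetric) {u w ψ : V} {ε : ℝ}
    (hε : 0 ≤ ε) (hu : RCLike.re ⟪u, ψ⟫_𝕜 = ‖u‖ ^ 2) (hw : ⟪P u, ψ⟫_𝕜 = ⟪P u, w⟫_𝕜)
    (hPu : ‖P u‖ ≤ ε * ‖u‖) :
    ‖u‖ ≤ ε * ‖w‖ + ‖ψ - P ψ‖ := by
  have : ‖u‖ ^ 2 ≤ ‖u‖ * (ε * ‖w‖ + ‖ψ - P ψ‖) :=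
    calc ‖u‖ ^ 2 = RCLike.re ⟪P u, ψ⟫_𝕜 + RCLike.re ⟪u, ψ - P ψ⟫_𝕜 := by
          rw [inner_sub_right, hP, map_sub, add_sub_cancel, hu]
      _ ≤ ‖P u‖ * ‖w‖ + ‖u‖ * ‖ψ - P ψ‖ := by
          rw [hw]; gcongr <;> exact re_inner_le_norm _ _
      _ ≤ ε * ‖u‖ * ‖w‖ + ‖u‖ * ‖ψ - P ψ‖ := by gcongr
      _ = ‖u‖ * (ε * ‖w‖ + ‖ψ - P ψ‖) := by ring
  rcases (norm_nonneg u).eq_or_lt with hu0 | hu0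
  · rw [← hu0]
    positivity
  · exact le_of_mul_le_mul_left (by rwa [sq] at this) hu0

section ResolutionOfIdentity

variable {ι : Type*} {s : Finset ι} {E : ι → V →ₗ[𝕜] V}

theorem inner_eq_sum_inner_apply_left (hEsym : ∀ m ∈ s, (E m).IsSymmetric)
    (hEsum : ∑ m ∈ s, E m = LinearMap.id) (v ψ : V) :
    ⟪v, ψ⟫_𝕜 = ∑ m ∈ s, ⟪E m v, ψ⟫_𝕜 := by
  conv_lhs => rw [← LinearMap.id_apply (R := 𝕜) ψ, ← hEsum, LinearMap.sum_apply, inner_sum]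
  exact sum_congr rfl fun m hm => (hEsym m hm v ψ).symm

theorem norm_sq_eq_sum_norm_apply_sq (hE : ∀ m ∈ s, (E m).IsSymmetricProjection)
    (hEsum : ∑ m ∈ s, E m = LinearMap.id) (ψ : V) :
    ‖ψ‖ ^ 2 = ∑ m ∈ s, ‖E m ψ‖ ^ 2 := by
  rw [← inner_self_eq_norm_sq (𝕜 := 𝕜),
    inner_eq_sum_inner_apply_left (fun m hm => (hE m hm).isSymmetric) hEsum, map_sum]
  exact sum_congr rfl fun m hm => (hE m hm).re_inner_apply_left ψ

theorem inner_eq_inner_add_of_apply_eq_zero (hEsym : ∀ m ∈ s, (E m).IsSymmetric)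
    (hEsum : ∑ m ∈ s, E m = LinearMap.id) {i j : ι} (hi : i ∈ s) (hj : j ∈ s) (hij : i ≠ j)
    {v : V} (hv : ∀ m ∈ s, m ≠ i → m ≠ j → E m v = 0) (ψ : V) :
    ⟪v, ψ⟫_𝕜 = ⟪v, E i ψ + E j ψ⟫_𝕜 := by
  rw [inner_eq_sum_inner_apply_left hEsym hEsum,
    sum_eq_add_of_mem i j hi hj hij fun m hm hne => by rw [hv m hm hne.1 hne.2, inner_zero_left],
    inner_add_right, hEsym i hi, hEsym j hj]

end ResolutionOfIdentity

theorem Real.sqrt_sum_add_sq_le {ι : Type*} (s : Finset ι) (f g : ι → ℝ) :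
    √(∑ i ∈ s, (f i + g i) ^ 2) ≤ √(∑ i ∈ s, f i ^ 2) + √(∑ i ∈ s, g i ^ 2) := by
  refine Real.sqrt_le_iff.mpr ⟨by positivity, ?_⟩
  have hf : √(∑ i ∈ s, f i ^ 2) ^ 2 = ∑ i ∈ s, f i ^ 2 := Real.sq_sqrt (by positivity)
  have hg : √(∑ i ∈ s, g i ^ 2) ^ 2 = ∑ i ∈ s, g i ^ 2 := Real.sq_sqrt (by positivity)
  have hcs := Real.sum_mul_le_sqrt_mul_sqrt s f g
  calc ∑ i ∈ s, (f i + g i) ^ 2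
      = ∑ i ∈ s, f i ^ 2 + 2 * ∑ i ∈ s, f i * g i + ∑ i ∈ s, g i ^ 2 := by
        simp only [add_sq, sum_add_distrib, mul_sum, mul_assoc]
    _ ≤ _ := by rw [add_sq, hf, hg]; linarith

theorem one_sub_sqrt_two_mul_sq_mul_sum_sq_le {N : ℕ} {a c : ℕ → ℝ} {ε : ℝ} (hε0 : 0 ≤ ε)
    (hε : √2 * ε ≤ 1) (ha : ∀ i, 0 ≤ a i) (haN : a N = 0)
    (hrec : ∀ i < N, a i ≤ ε * √(a i ^ 2 + a (i + 1) ^ 2) + c i) :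
    (1 - √2 * ε) ^ 2 * ∑ i ∈ range (N + 1), a i ^ 2 ≤ ∑ i ∈ range N, c i ^ 2 := by
  set A := ∑ i ∈ range (N + 1), a i ^ 2 with hA_def
  set S := ∑ i ∈ range N, c i ^ 2
  have hA0 : 0 ≤ A := by positivity
  have hS0 : 0 ≤ S := by positivity
  have hA : A = ∑ i ∈ range N, a i ^ 2 := by simp [hA_def, sum_range_succ, haN]
  have hshift : ∑ i ∈ range N, a (i + 1) ^ 2 ≤ A := by
    rw [hA_def, sum_range_succ' fun i => a i ^ 2]
    linarith [sq_nonneg (a 0)]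
  have hpair : √(∑ i ∈ range N, (ε * √(a i ^ 2 + a (i + 1) ^ 2)) ^ 2) ≤ √2 * ε * √A := by
    refine Real.sqrt_le_iff.mpr ⟨by positivity, ?_⟩
    simp only [mul_pow, Real.sq_sqrt (add_nonneg (sq_nonneg _) (sq_nonneg _)),
      Real.sq_sqrt zero_le_two, Real.sq_sqrt hA0, ← mul_sum, sum_add_distrib, ← hA]
    nlinarith [mul_le_mul_of_nonneg_left hshift (sq_nonneg ε)]
  have hroot : √A ≤ √2 * ε * √A + √S :=
    calc √A ≤ √(∑ i ∈ range N, (ε * √(a i ^ 2 + a (i + 1) ^ 2) + c i) ^ 2) :=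
          Real.sqrt_le_sqrt <| hA ▸ sum_le_sum fun i hi =>
            pow_le_pow_left₀ (ha i) (hrec i (mem_range.mp hi)) 2
      _ ≤ √(∑ i ∈ range N, (ε * √(a i ^ 2 + a (i + 1) ^ 2)) ^ 2) + √S :=
          Real.sqrt_sum_add_sq_le _ _ _
      _ ≤ √2 * ε * √A + √S := by gcongr
  calc (1 - √2 * ε) ^ 2 * A = ((1 - √2 * ε) * √A) ^ 2 := by rw [mul_pow, Real.sq_sqrt hA0]
    _ ≤ √S ^ 2 := by
        gcongr
        linarith
    _ = S := Real.sq_sqrt hS0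

theorem mul_sum_norm_sub_apply_sq_le {N : ℕ} {h G : ℕ → V →ₗ[𝕜] V} {γ : ℝ}
    (hG : ∀ n ≤ N, (G n).IsSymmetricProjection)
    (hgap : ∀ n ≤ N, ∀ φ : V, γ * (‖φ‖ ^ 2 - RCLike.re ⟪φ, G n φ⟫_𝕜) ≤ RCLike.re ⟪φ, h n φ⟫_𝕜)
    {ψ : V} (hpos : 0 ≤ RCLike.re ⟪ψ, h 0 ψ⟫_𝕜) :
    γ * ∑ i ∈ range N, ‖ψ - G (i + 1) ψ‖ ^ 2 ≤
      RCLike.re ⟪ψ, (∑ i ∈ range (N + 1), h i) ψ⟫_𝕜 := by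
  rw [LinearMap.sum_apply, inner_sum, map_sum, sum_range_succ', mul_sum]
  have := sum_le_sum fun i (hi : i ∈ range N) =>
    (hG (i + 1) (mem_range.mp hi)).norm_sub_apply_sq ψ ▸ hgap (i + 1) (mem_range.mp hi) ψ
  linarith

section MartingaleDecomposition

variable {N : ℕ} {E G : ℕ → V →ₗ[𝕜] V}

theorem isSymmetricProjection_of_comp_eq_ite (hEsym : ∀ m ≤ N, (E m).IsSymmetric)
    (hEorth : ∀ m ≤ N, ∀ n ≤ N, E m ∘ₗ E n = if m = n then E m else 0) {m : ℕ} (hm : m ≤ N) :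
    (E m).IsSymmetricProjection where
  isIdempotentElem := by
    rw [IsIdempotentElem, Module.End.mul_eq_comp]
    simpa using hEorth m hm m hm
  isSymmetric := hEsym m hm

theorem apply_apply_eq_zero_of_comp_eq_ite
    (hEorth : ∀ m ≤ N, ∀ n ≤ N, E m ∘ₗ E n = if m = n then E m else 0) {m n : ℕ} (hm : m ≤ N)
    (hn : n ≤ N) (hmn : m ≠ n) (x : V) : E m (E n x) = 0 := by
  simpa [hmn] using LinearMap.congr_fun (hEorth m hm n hn) x

theorem norm_apply_le_of_comp_commute {i : ℕ} (hi : i < N) {ε : ℝ} (hε : 0 ≤ ε)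
    (hEsym : ∀ m ≤ N, (E m).IsSymmetric)
    (hEorth : ∀ m ≤ N, ∀ n ≤ N, E m ∘ₗ E n = if m = n then E m else 0)
    (hEsum : ∑ m ∈ range (N + 1), E m = LinearMap.id) (hG : (G (i + 1)).IsSymmetricProjection)
    (hcomm : ∀ m ≤ N, m ≠ i → m ≠ i + 1 → E m ∘ₗ G (i + 1) = G (i + 1) ∘ₗ E m)
    (hkey : ∀ φ : V, RCLike.re ⟪E i φ, G (i + 1) (E i φ)⟫_𝕜 ≤ ε ^ 2 * RCLike.re ⟪φ, E i φ⟫_𝕜)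
    (ψ : V) :
    ‖E i ψ‖ ≤ ε * √(‖E i ψ‖ ^ 2 + ‖E (i + 1) ψ‖ ^ 2) + ‖ψ - G (i + 1) ψ‖ := by
  have hEi := isSymmetricProjection_of_comp_eq_ite hEsym hEorth hi.le
  have hGE : ‖G (i + 1) (E i ψ)‖ ≤ ε * ‖E i ψ‖ := by
    have := hkey ψ
    rw [hG.re_inner_apply_right, hEi.re_inner_apply_right, ← mul_pow] at this
    exact (sq_le_sq₀ (norm_nonneg _) (by positivity)).mp this
  have hsupp : ⟪G (i + 1) (E i ψ), ψ⟫_𝕜 = ⟪G (i + 1) (E i ψ), E i ψ + E (i + 1) ψ⟫_𝕜 := by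
    refine inner_eq_inner_add_of_apply_eq_zero (fun m hm => hEsym m (mem_range_succ_iff.mp hm))
      hEsum (mem_range.mpr (by omega)) (mem_range.mpr (by omega)) (by omega)
      (fun m hm hmi hmi1 => ?_) ψ
    have hmN := mem_range_succ_iff.mp hm
    rw [← LinearMap.comp_apply, hcomm m hmN hmi hmi1, LinearMap.comp_apply,
      apply_apply_eq_zero_of_comp_eq_ite hEorth hmN hi.le hmi, map_zero]
  have hpyth : ‖E i ψ + E (i + 1) ψ‖ = √(‖E i ψ‖ ^ 2 + ‖E (i + 1) ψ‖ ^ 2) := by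
    have horth : ⟪E i ψ, E (i + 1) ψ⟫_𝕜 = 0 := by
      rw [hEsym i hi.le, apply_apply_eq_zero_of_comp_eq_ite hEorth hi.le hi (by omega),
        inner_zero_right]
    rw [sq, sq, ← norm_add_sq_eq_norm_sq_add_norm_sq_of_inner_eq_zero _ _ horth,
      Real.sqrt_mul_self (norm_nonneg _)]
  rw [← hpyth]
  exact norm_le_of_inner_apply_eq hG.isSymmetric hε (hEi.re_inner_apply_left ψ) hsupp hGE

end MartingaleDecomposition

end

theorem stmt10_general
    {H : Type*} [NormedAddCommGroup H] [InnerProductSpace ℂ H]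
    (N : ℕ) (h G E : ℕ → (H →ₗ[ℂ] H)) (γ ε : ℝ)
    (hγ : 0 < γ) (hε0 : 0 ≤ ε) (hε : ε < 1 / Real.sqrt 2)
    -- each `h i` is symmetric and nonnegative
    (hpos : ∀ i ≤ N, ∀ φ : H, 0 ≤ (⟪φ, h i φ⟫_ℂ).re)
    -- `G i` is the orthogonal projection onto `ker (h i)`
    (hGsym : ∀ i ≤ N, LinearMap.IsSymmetric (G i))
    (hGproj : ∀ i ≤ N, G i ∘ₗ G i = G i)
    -- the martingale projections `E i`: symmetric, mutually orthogonal, resolution of identity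
    (hEsym : ∀ i ≤ N, LinearMap.IsSymmetric (E i))
    (hEorth : ∀ i ≤ N, ∀ j ≤ N, E i ∘ₗ E j = if i = j then E i else 0)
    (hEsum : ∑ i ∈ Finset.range (N + 1), E i = LinearMap.id)
    -- `E N` is the orthogonal projection onto `ker H`
    (hEN : ∀ φ : H, (∑ i ∈ Finset.range (N + 1), h i) φ = 0 ↔ E N φ = φ)
    -- gap of the local Hamiltonians:  h_i ≥ γ (1 - G_i)
    (hgap : ∀ i ≤ N, ∀ φ : H, γ * (‖φ‖^2 - (⟪φ, G i φ⟫_ℂ).re) ≤ (⟪φ, h i φ⟫_ℂ).re)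
    -- commutation: E_m commutes with G_n for m ≤ n-2 or m ≥ n+1
    (hcomm : ∀ m ≤ N, ∀ n ≤ N, (m + 2 ≤ n ∨ n + 1 ≤ m) → E m ∘ₗ G n = G n ∘ₗ E m)
    -- key estimate: E_i G_{i+1} E_i ≤ ε² E_i for 0 ≤ i ≤ N-1
    (hkey : ∀ i < N, ∀ φ : H, (⟪E i φ, G (i+1) (E i φ)⟫_ℂ).re ≤ ε^2 * (⟪φ, E i φ⟫_ℂ).re)
    -- ψ orthogonal to ker H
    (ψ : H) (hψ : ∀ φ : H, (∑ i ∈ Finset.range (N + 1), h i) φ = 0 → ⟪φ, ψ⟫_ℂ = 0) :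
    γ * (1 - Real.sqrt 2 * ε)^2 * ‖ψ‖^2 ≤
      (⟪ψ, (∑ i ∈ Finset.range (N + 1), h i) ψ⟫_ℂ).re := by
  have hE m (hm : m ≤ N) := isSymmetricProjection_of_comp_eq_ite hEsym hEorth hm
  have hG n (hn : n ≤ N) : (G n).IsSymmetricProjection := ⟨hGproj n hn, hGsym n hn⟩
  have hENψ : E N ψ = 0 := by
    have hker := (hEN (E N ψ)).mpr (LinearMap.congr_fun (hE N le_rfl).isIdempotentElem ψ)
    rw [← norm_eq_zero, ← sq_eq_zero_iff, ← (hE N le_rfl).re_inner_apply_left, hψ _ hker,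
      map_zero]
  have hstep (i : ℕ) (hi : i < N) :=
    norm_apply_le_of_comp_commute hi hε0 hEsym hEorth hEsum (hG (i + 1) hi)
      (fun m hm hmi hmi1 => hcomm m hm (i + 1) hi (by omega)) (hkey i hi) ψ
  have hscalar := one_sub_sqrt_two_mul_sq_mul_sum_sq_le hε0
    ((lt_div_iff₀' (by positivity)).mp hε).le (fun _ => norm_nonneg _) (by simp [hENψ]) hstep
  rw [← norm_sq_eq_sum_norm_apply_sq (fun m hm => hE m (mem_range_succ_iff.mp hm)) hEsum]
    at hscalar
  calc γ * (1 - √2 * ε) ^ 2 * ‖ψ‖ ^ 2 = γ * ((1 - √2 * ε) ^ 2 * ‖ψ‖ ^ 2) := by ring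
    _ ≤ γ * ∑ i ∈ range N, ‖ψ - G (i + 1) ψ‖ ^ 2 := by gcongr
    _ ≤ _ := mul_sum_norm_sub_apply_sq_le hG hgap (hpos 0 N.zero_le ψ)

/-- Abstract martingale-method gap theorem (Nachtergaele): if `H = Σ_{i=0}^N h_i` is a sum
of nonnegative symmetric operators, each satisfying `h_i ≥ γ(1 - G_i)` with `G_i` the
orthogonal projection onto `ker h_i`, if the symmetric projections `E_0,…,E_N` are mutually
orthogonal, sum to the identity, `E_N` is the orthogonal projection onto `ker H`,
`E_m` commutes with `G_n` whenever `m ≤ n-2` or `m ≥ n+1`, and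
`E_i G_{i+1} E_i ≤ ε² E_i` for `0 ≤ i ≤ N-1` with `0 ≤ ε < 1/√2`, then for every `ψ`
orthogonal to `ker H` one has `⟨ψ, Hψ⟩ ≥ γ(1-√2 ε)² ‖ψ‖²`. -/
theorem stmt10
    {H : Type*} [NormedAddCommGroup H] [InnerProductSpace ℂ H] [FiniteDimensional ℂ H]
    (N : ℕ) (h G E : ℕ → (H →ₗ[ℂ] H)) (γ ε : ℝ)
    (hγ : 0 < γ) (hε0 : 0 ≤ ε) (hε : ε < 1 / Real.sqrt 2)
    -- each `h i` is symmetric and nonnegative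
    (hsym : ∀ i ≤ N, LinearMap.IsSymmetric (h i))
    (hpos : ∀ i ≤ N, ∀ φ : H, 0 ≤ (⟪φ, h i φ⟫_ℂ).re)
    -- `G i` is the orthogonal projection onto `ker (h i)`
    (hGsym : ∀ i ≤ N, LinearMap.IsSymmetric (G i))
    (hGproj : ∀ i ≤ N, G i ∘ₗ G i = G i)
    (hGker : ∀ i ≤ N, ∀ φ : H, h i φ = 0 ↔ G i φ = φ)
    -- the martingale projections `E i`: symmetric, mutually orthogonal, resolution of identity
    (hEsym : ∀ i ≤ N, LinearMap.IsSymmetric (E i))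
    (hEorth : ∀ i ≤ N, ∀ j ≤ N, E i ∘ₗ E j = if i = j then E i else 0)
    (hEsum : ∑ i ∈ Finset.range (N + 1), E i = LinearMap.id)
    -- `E N` is the orthogonal projection onto `ker H`
    (hEN : ∀ φ : H, (∑ i ∈ Finset.range (N + 1), h i) φ = 0 ↔ E N φ = φ)
    -- gap of the local Hamiltonians:  h_i ≥ γ (1 - G_i)
    (hgap : ∀ i ≤ N, ∀ φ : H, γ * (‖φ‖^2 - (⟪φ, G i φ⟫_ℂ).re) ≤ (⟪φ, h i φ⟫_ℂ).re)
    -- commutation: E_m commutes with G_n for m ≤ n-2 or m ≥ n+1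
    (hcomm : ∀ m ≤ N, ∀ n ≤ N, (m + 2 ≤ n ∨ n + 1 ≤ m) → E m ∘ₗ G n = G n ∘ₗ E m)
    -- key estimate: E_i G_{i+1} E_i ≤ ε² E_i for 0 ≤ i ≤ N-1
    (hkey : ∀ i < N, ∀ φ : H, (⟪E i φ, G (i+1) (E i φ)⟫_ℂ).re ≤ ε^2 * (⟪φ, E i φ⟫_ℂ).re)
    -- ψ orthogonal to ker H
    (ψ : H) (hψ : ∀ φ : H, (∑ i ∈ Finset.range (N + 1), h i) φ = 0 → ⟪φ, ψ⟫_ℂ = 0) :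
    γ * (1 - Real.sqrt 2 * ε)^2 * ‖ψ‖^2 ≤
      (⟪ψ, (∑ i ∈ Finset.range (N + 1), h i) ψ⟫_ℂ).re :=
  stmt10_general N h G E γ ε hγ hε0 hε hpos hGsym hGproj hEsym hEorth hEsum hEN hgap hcomm hkey ψ hψ
end

section
/- Overlap estimate (kink case, right side): Let 0 < q < 1, f a nonzero complex number, and m ≥ 0, n_r ≥ 1 integers with |f| q^{-n_r} > 1. In ℂ²⊗ℂ² with |ξ⟩ = (q|↑↓⟩ - |↓↑⟩)/sqrt(1+q²), χ = |↑⟩ + f q^{-n_r-m}|↓⟩, and χ^⊥ = \bar{f} q^{-n_r-m-1}|↑⟩ - |↓⟩ (any vector orthogonal to the next-site ground state), one has 1 - |⟨ξ, χ⊗χ^⊥⟩|²/‖χ⊗χ^⊥‖² = 1 - (q²/(1+q²)) · (1 + |f|²q^{-2(n_r+m+1)})/(1 + |f|²q^{-2(n_r+m)}) < 1/2. -/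
open Finset in
private lemma stmt12_aux1 (q s F : ℝ) (hq0 : 0 < q) (hs : 0 < s) (f : ℂ)
    (hfc : f * (starRingEnd ℂ) f = ((F:ℂ))^2) (k : ℕ) :
    (∑ i, (starRingEnd ℂ) ((![0, (q:ℂ)/((s:ℝ):ℂ), -1/((s:ℝ):ℂ), 0]) i) *
      ((![1 * ((starRingEnd ℂ) f * ((q:ℂ)^(k+1))⁻¹), 1*(-1),
         (f * ((q:ℂ)^k)⁻¹) * ((starRingEnd ℂ) f * ((q:ℂ)^(k+1))⁻¹),
         (f * ((q:ℂ)^k)⁻¹)*(-1)]) i))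
    = ((-(q + F^2 * (q^(2*k+1))⁻¹) / s : ℝ) : ℂ) := by
  have hq : (q:ℂ) ≠ 0 := by exact_mod_cast hq0.ne'
  have hk0 : ((q:ℂ)^k) ≠ 0 := pow_ne_zero _ hq
  have hsc : ((s:ℝ):ℂ) ≠ 0 := by exact_mod_cast hs.ne'
  simp only [Fin.sum_univ_four, Matrix.cons_val_zero, Matrix.cons_val_one, Matrix.head_cons,
    Matrix.cons_val_two, Matrix.tail_cons, Matrix.cons_val_three, map_zero, map_div₀,
    map_neg, map_one, Complex.conj_ofReal, zero_mul]
  rw [show 2*k+1 = k + (k + 1) by ring]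
  push_cast
  rw [pow_add]
  field_simp
  linear_combination (-((q:ℂ))^(k+(k+1))) * hfc

open Finset in
private lemma stmt12_aux2 (q F : ℝ) (hq0 : 0 < q) (f : ℂ)
    (hfc : f * (starRingEnd ℂ) f = ((F:ℂ))^2) (k : ℕ) :
    (∑ i, (starRingEnd ℂ)
      ((![1 * ((starRingEnd ℂ) f * ((q:ℂ)^(k+1))⁻¹), 1*(-1),
         (f * ((q:ℂ)^k)⁻¹) * ((starRingEnd ℂ) f * ((q:ℂ)^(k+1))⁻¹),
         (f * ((q:ℂ)^k)⁻¹)*(-1)]) i) *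
      ((![1 * ((starRingEnd ℂ) f * ((q:ℂ)^(k+1))⁻¹), 1*(-1),
         (f * ((q:ℂ)^k)⁻¹) * ((starRingEnd ℂ) f * ((q:ℂ)^(k+1))⁻¹),
         (f * ((q:ℂ)^k)⁻¹)*(-1)]) i))
    = (((1 + F^2*(q^(2*k))⁻¹) * (F^2 * (q^(2*k+2))⁻¹ + 1) : ℝ) : ℂ) := by
  have hq : (q:ℂ) ≠ 0 := by exact_mod_cast hq0.ne'
  have hk0 : ((q:ℂ)^k) ≠ 0 := pow_ne_zero _ hq
  have hk1 : ((q:ℂ)^(k+1)) ≠ 0 := pow_ne_zero _ hq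
  have hfc' : (starRingEnd ℂ) f * f = ((F:ℂ))^2 := by rw [mul_comm]; exact hfc
  simp only [Fin.sum_univ_four, Matrix.cons_val_zero, Matrix.cons_val_one, Matrix.head_cons,
    Matrix.cons_val_two, Matrix.tail_cons, Matrix.cons_val_three, map_mul, map_neg, map_one,
    map_inv₀, map_pow, Complex.conj_ofReal, RingHomCompTriple.comp_apply, RingHom.id_apply,
    Complex.conj_conj]
  push_cast
  field_simp
  linear_combination (((q:ℂ)^k)^2 * ((q:ℂ)^(k+1))^2 * (f * (starRingEnd ℂ) f + (F:ℂ)^2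
    + ((q:ℂ)^k)^2 + ((q:ℂ)^(k+1))^2)) * hfc



open Finset in
/-- Overlap estimate (kink case, right side): with `ξ = (q|↑↓⟩ - |↓↑⟩)/√(1+q²)`,
`χ = |↑⟩ + f q^{-(n_r+m)}|↓⟩`, `χ^⊥ = conj(f) q^{-(n_r+m+1)}|↑⟩ - |↓⟩` in `ℂ²⊗ℂ² ≅ ℂ⁴`
(basis `↑↑,↑↓,↓↑,↓↓`), and hypotheses `0 < q < 1`, `f ≠ 0`, `m ≥ 0`, `n_r ≥ 1`,
`|f| q^{-n_r} > 1`, the quantity `1 - |⟨ξ, χ⊗χ^⊥⟩|²/‖χ⊗χ^⊥‖²` equals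
`1 - (q²/(1+q²))·(1+|f|²q^{-2(n_r+m+1)})/(1+|f|²q^{-2(n_r+m)})`, which is `< 1/2`. -/
theorem stmt12 (q : ℝ) (hq0 : 0 < q) (hq1 : q < 1) (f : ℂ) (hf : f ≠ 0)
    (m nr : ℕ) (hnr : 1 ≤ nr) (hfq : ‖f‖ * (q ^ nr)⁻¹ > 1) :
    let ip : (Fin 4 → ℂ) → (Fin 4 → ℂ) → ℂ := fun u v => ∑ i, (starRingEnd ℂ) (u i) * v i
    let ξ : Fin 4 → ℂ :=
      ![0, (q : ℂ) / (Real.sqrt (1 + q^2) : ℝ), -1 / (Real.sqrt (1 + q^2) : ℝ), 0]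
    let χu : ℂ := 1
    let χd : ℂ := f * ((q : ℂ) ^ (nr + m))⁻¹
    let pu : ℂ := (starRingEnd ℂ) f * ((q : ℂ) ^ (nr + m + 1))⁻¹
    let pd : ℂ := -1
    let v : Fin 4 → ℂ := ![χu * pu, χu * pd, χd * pu, χd * pd]
    (1 - ‖ip ξ v‖^2 / (ip v v).re
        = 1 - (q^2 / (1 + q^2)) *
            (1 + ‖f‖^2 * (q ^ (2*(nr + m + 1)))⁻¹) /
            (1 + ‖f‖^2 * (q ^ (2*(nr + m)))⁻¹)) ∧
    1 - (q^2 / (1 + q^2)) *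
        (1 + ‖f‖^2 * (q ^ (2*(nr + m + 1)))⁻¹) /
        (1 + ‖f‖^2 * (q ^ (2*(nr + m)))⁻¹) < 1/2 := by
  intro ip ξ χu χd pu pd v
  set F := ‖f‖ with hFdef
  have hF : 0 < F := norm_pos_iff.mpr hf
  set s := Real.sqrt (1 + q^2) with hsdef
  have hs2 : s^2 = 1 + q^2 := Real.sq_sqrt (by positivity)
  have hs : 0 < s := Real.sqrt_pos.mpr (by positivity)
  have hfc : f * (starRingEnd ℂ) f = ((F:ℂ))^2 := by
    rw [Complex.mul_conj, Complex.normSq_eq_norm_sq]; norm_cast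
  have hξv : ip ξ v = ((-(q + F^2 * (q^(2*(nr+m)+1))⁻¹) / s : ℝ) : ℂ) :=
    stmt12_aux1 q s F hq0 hs f hfc (nr+m)
  have hvv : ip v v = (((1 + F^2*(q^(2*(nr+m)))⁻¹) * (F^2 * (q^(2*(nr+m)+2))⁻¹ + 1) : ℝ) : ℂ) :=
    stmt12_aux2 q F hq0 f hfc (nr+m)
  have hA : 1 < F^2 * (q^(2*(nr+m)))⁻¹ := by
    have h1 : 1 < F^2 * (q^(2*nr))⁻¹ := by
      have e : F^2 * (q^(2*nr))⁻¹ = (F * (q^nr)⁻¹)^2 := by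
        rw [two_mul, pow_add, mul_inv]; ring
      rw [e]; nlinarith [hfq]
    have h2 : q^(2*(nr+m)) ≤ q^(2*nr) :=
      pow_le_pow_of_le_one (le_of_lt hq0) (le_of_lt hq1) (by omega)
    calc (1:ℝ) < F^2 * (q^(2*nr))⁻¹ := h1
      _ ≤ F^2 * (q^(2*(nr+m)))⁻¹ :=
        mul_le_mul_of_nonneg_left (inv_anti₀ (by positivity) h2) (by positivity)
  have hqk : (0:ℝ) < q^(2*(nr+m)) := by positivity
  constructor
  · rw [hξv, hvv, Complex.norm_real, Real.norm_eq_abs, Complex.ofReal_re, _root_.sq_abs]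
    rw [show 2*(nr+m+1) = 2*(nr+m)+2 by ring]
    rw [show q^(2*(nr+m)+2) = q^(2*(nr+m)) * q^2 from by rw [pow_add]]
    rw [show q^(2*(nr+m)+1) = q^(2*(nr+m)) * q from pow_succ _ _]
    rw [div_pow, hs2]
    set t := q^(2*(nr+m)) with ht
    field_simp
    ring_nf
  · rw [show 2*(nr+m+1) = 2*(nr+m)+2 by ring]
    rw [show q^(2*(nr+m)+2) = q^(2*(nr+m)) * q^2 from by rw [pow_add]]
    set A := F^2 * (q^(2*(nr+m)))⁻¹ with hAdef
    have hB : F^2 * (q^(2*(nr+m)) * q^2)⁻¹ = A / q^2 := by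
      rw [hAdef, mul_inv]; ring
    rw [hB]
    have hq2 : 0 < q^2 := by positivity
    have h1A : 0 < 1 + A := by nlinarith
    have hq21 : q^2 < 1 := by nlinarith
    have expand : q^2/(1+q^2) * (1 + A/q^2) / (1+A) = (q^2 + A)/((1+q^2)*(1+A)) := by
      field_simp
    have hX : (1:ℝ)/2 < (q^2 + A)/((1+q^2)*(1+A)) := by
      rw [div_lt_div_iff₀ (by norm_num) (by positivity)]
      nlinarith [mul_pos (sub_pos.mpr hA) (sub_pos.mpr hq21)]
    rw [expand]
    linarith
end

section
/- The kink states are zero-energy eigenstates: for spin 1/2, Δ > 1, q ∈ (0,1) with q+q^{-1}=2Δ, and any z ∈ ℂ, the product state ψ(z) = ⊗_{x=1}^b χ_x(z) with χ_x(z) = (|↑⟩ + z q^{-x} |↓⟩)/sqrt(1+|z|²q^{-2x}) satisfies H₀^{+-} ψ(z) = 0, where H₀^{+-} = Σ_{x=1}^{b-1} h^{+-}_{x,x+1} is the spin-1/2 kink Hamiltonian. -/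
open Matrix Finset

noncomputable def S1 : Matrix (Fin 2) (Fin 2) ℂ := (1/2 : ℂ) • !![0, 1; 1, 0]
noncomputable def S2 : Matrix (Fin 2) (Fin 2) ℂ :=
  (1/2 : ℂ) • !![0, -Complex.I; Complex.I, 0]
noncomputable def S3 : Matrix (Fin 2) (Fin 2) ℂ := (1/2 : ℂ) • !![1, 0; 0, -1]

/-- Two-site operator `P ⊗ Q` acting at sites `x ≠ x'` of a chain of `b` spin-1/2 sites. -/
noncomputable def onSites (b : ℕ) (x x' : Fin b) (P Q : Matrix (Fin 2) (Fin 2) ℂ) :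
    Matrix (Fin b → Fin 2) (Fin b → Fin 2) ℂ :=
  fun σ τ => P (σ x) (τ x) * Q (σ x') (τ x') *
    ∏ z ∈ (univ.erase x).erase x', (if σ z = τ z then 1 else 0)

/-- Single-site operator `P` acting at site `x`. -/
noncomputable def onSite (b : ℕ) (x : Fin b) (P : Matrix (Fin 2) (Fin 2) ℂ) :
    Matrix (Fin b → Fin 2) (Fin b → Fin 2) ℂ :=
  fun σ τ => P (σ x) (τ x) * ∏ z ∈ univ.erase x, (if σ z = τ z then 1 else 0)

/-- The spin-1/2 kink Hamiltonian `H₀^{+-} = Σ_{x=1}^{b-1} h^{+-}_{x,x+1}` on a chain of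
`b` sites (here 0-indexed, sites `0,…,b-1`), with
`h^{+-}_{x,x+1} = -(1/Δ)(S¹_xS¹_{x+1}+S²_xS²_{x+1}) - S³_xS³_{x+1} + ¼·1
                  - ½A(S³_x - S³_{x+1})`, `A = √(1-Δ⁻²)`. -/
noncomputable def Hkink (b : ℕ) (Δ : ℝ) : Matrix (Fin b → Fin 2) (Fin b → Fin 2) ℂ :=
  ∑ x ∈ (Finset.range (b-1)).attach,
    have hx : x.1 + 1 < b := by have := Finset.mem_range.mp x.2; omega
    (-((Δ : ℂ)⁻¹ • (onSites b ⟨x.1, by omega⟩ ⟨x.1+1, hx⟩ S1 S1 +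
                    onSites b ⟨x.1, by omega⟩ ⟨x.1+1, hx⟩ S2 S2))
      - onSites b ⟨x.1, by omega⟩ ⟨x.1+1, hx⟩ S3 S3
      + (1/4 : ℂ) • 1
      - ((Real.sqrt (1 - Δ⁻¹^2) : ℂ)/2) •
          (onSite b ⟨x.1, by omega⟩ S3 - onSite b ⟨x.1+1, hx⟩ S3))

lemma sum_mulVec' {n : Type*} [Fintype n] [DecidableEq n] {ι : Type*} (s : Finset ι)
    (A : ι → Matrix n n ℂ) (v : n → ℂ) :
    (∑ i ∈ s, A i).mulVec v = ∑ i ∈ s, (A i).mulVec v := by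
  induction s using Finset.cons_induction with
  | empty => simp [Matrix.mulVec, dotProduct]
  | cons a s ha ih => simp [Finset.sum_cons, Matrix.add_mulVec, ih]

lemma mulVec_onSites {b : ℕ} (x x' : Fin b) (hxx : x ≠ x')
    (P Q : Matrix (Fin 2) (Fin 2) ℂ) (f : Fin b → Fin 2 → ℂ) (σ : Fin b → Fin 2) :
    (onSites b x x' P Q).mulVec (fun τ => ∏ y, f y (τ y)) σ
    = (∑ a : Fin 2, P (σ x) a * f x a) * (∑ c : Fin 2, Q (σ x') c * f x' c) *
      ∏ y ∈ (univ.erase x).erase x', f y (σ y) := by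
  classical
  set i : Fin 2 × Fin 2 → (Fin b → Fin 2) :=
    fun p => Function.update (Function.update σ x p.1) x' p.2 with hi
  have hix : ∀ p, i p x = p.1 := fun p => by
    simp [hi, Function.update_of_ne hxx]
  have hix' : ∀ p, i p x' = p.2 := fun p => by simp [hi]
  have hiy : ∀ p y, y ≠ x → y ≠ x' → i p y = σ y := fun p y h1 h2 => by
    simp [hi, Function.update_of_ne h1, Function.update_of_ne h2]
  have step1 : (onSites b x x' P Q).mulVec (fun τ => ∏ y, f y (τ y)) σ
      = ∑ p : Fin 2 × Fin 2,
          (P (σ x) (i p x) * Q (σ x') (i p x') *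
            ∏ y ∈ (univ.erase x).erase x', (if σ y = i p y then (1:ℂ) else 0)) *
          ∏ y, f y (i p y) := by
    set F : (Fin b → Fin 2) → ℂ := fun τ => (P (σ x) (τ x) * Q (σ x') (τ x') *
            ∏ y ∈ (univ.erase x).erase x', (if σ y = τ y then (1:ℂ) else 0)) *
          ∏ y, f y (τ y) with hF
    show (∑ τ : Fin b → Fin 2, F τ) = ∑ p : Fin 2 × Fin 2, F (i p)
    rw [← Finset.sum_image (f := F) (g := i) (s := univ)
        (fun p _ p' _ h => by
          have h1 := congrArg (fun g => g x) h
          have h2 := congrArg (fun g => g x') h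
          simp only [hix, hix'] at h1 h2
          exact Prod.ext h1 h2)]
    refine (Finset.sum_subset (Finset.subset_univ _) ?_).symm
    intro τ _ hτ
    have hex : ∃ y, y ≠ x ∧ y ≠ x' ∧ τ y ≠ σ y := by
      by_contra hcon
      push_neg at hcon
      refine hτ (Finset.mem_image.mpr ⟨(τ x, τ x'), Finset.mem_univ _, ?_⟩)
      funext y
      by_cases h1 : y = x'
      · subst h1; simp [hix']
      · by_cases h2 : y = x
        · subst h2; simp [hix]
        · rw [hiy _ _ h2 h1]; exact (hcon y h2 h1).symm
    obtain ⟨y, h1, h2, h3⟩ := hex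
    have hy : y ∈ (univ.erase x).erase x' := by
      simp [Finset.mem_erase, h1, h2]
    have hz : (∏ y ∈ (univ.erase x).erase x', if σ y = τ y then (1:ℂ) else 0) = 0 :=
      Finset.prod_eq_zero hy (if_neg (fun h => h3 h.symm))
    simp [hF, hz]
  rw [step1]
  rw [Finset.sum_mul_sum, Finset.sum_mul, Fintype.sum_prod_type]
  refine Finset.sum_congr rfl fun a _ => ?_
  rw [Finset.sum_mul]
  refine Finset.sum_congr rfl fun c _ => ?_
  have hdelta : (∏ y ∈ (univ.erase x).erase x',
      (if σ y = i (a, c) y then (1:ℂ) else 0)) = 1 := by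
    refine Finset.prod_eq_one fun y hy => ?_
    have hy1 := (Finset.mem_erase.mp hy).1
    have hy2 := (Finset.mem_erase.mp (Finset.mem_erase.mp hy).2).1
    rw [if_pos (hiy _ _ hy2 hy1).symm]
  have hprod : (∏ y, f y (i (a, c) y))
      = f x a * (f x' c * ∏ y ∈ (univ.erase x).erase x', f y (σ y)) := by
    rw [← Finset.mul_prod_erase univ _ (Finset.mem_univ x),
        ← Finset.mul_prod_erase (univ.erase x) _
          (Finset.mem_erase.mpr ⟨Ne.symm hxx, Finset.mem_univ x'⟩),
        hix, hix']
    congr 2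
    refine Finset.prod_congr rfl fun y hy => ?_
    have hy1 := (Finset.mem_erase.mp hy).1
    have hy2 := (Finset.mem_erase.mp (Finset.mem_erase.mp hy).2).1
    rw [hiy _ _ hy2 hy1]
  rw [hdelta, hix, hix', hprod]
  ring

lemma mulVec_onSite {b : ℕ} (x : Fin b)
    (P : Matrix (Fin 2) (Fin 2) ℂ) (f : Fin b → Fin 2 → ℂ) (σ : Fin b → Fin 2) :
    (onSite b x P).mulVec (fun τ => ∏ y, f y (τ y)) σ
    = (∑ a : Fin 2, P (σ x) a * f x a) * ∏ y ∈ univ.erase x, f y (σ y) := by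
  classical
  set i : Fin 2 → (Fin b → Fin 2) := fun a => Function.update σ x a with hi
  have hix : ∀ a, i a x = a := fun a => by simp [hi]
  have hiy : ∀ a y, y ≠ x → i a y = σ y := fun a y h1 => by
    simp [hi, Function.update_of_ne h1]
  have step1 : (onSite b x P).mulVec (fun τ => ∏ y, f y (τ y)) σ
      = ∑ a : Fin 2,
          (P (σ x) (i a x) * ∏ y ∈ univ.erase x, (if σ y = i a y then (1:ℂ) else 0)) *
          ∏ y, f y (i a y) := by
    set F : (Fin b → Fin 2) → ℂ := fun τ => (P (σ x) (τ x) *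
            ∏ y ∈ univ.erase x, (if σ y = τ y then (1:ℂ) else 0)) *
          ∏ y, f y (τ y) with hF
    show (∑ τ : Fin b → Fin 2, F τ) = ∑ a : Fin 2, F (i a)
    rw [← Finset.sum_image (f := F) (g := i) (s := univ)
        (fun p _ p' _ h => by
          have h1 := congrArg (fun g => g x) h
          simpa only [hix] using h1)]
    refine (Finset.sum_subset (Finset.subset_univ _) ?_).symm
    intro τ _ hτ
    have hex : ∃ y, y ≠ x ∧ τ y ≠ σ y := by
      by_contra hcon
      push_neg at hcon
      refine hτ (Finset.mem_image.mpr ⟨τ x, Finset.mem_univ _, ?_⟩)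
      funext y
      by_cases h2 : y = x
      · subst h2; simp [hix]
      · rw [hiy _ _ h2]; exact (hcon y h2).symm
    obtain ⟨y, h1, h3⟩ := hex
    have hy : y ∈ univ.erase x := Finset.mem_erase.mpr ⟨h1, Finset.mem_univ _⟩
    have hz : (∏ y ∈ univ.erase x, if σ y = τ y then (1:ℂ) else 0) = 0 :=
      Finset.prod_eq_zero hy (if_neg (fun h => h3 h.symm))
    simp [hF, hz]
  rw [step1, Finset.sum_mul]
  refine Finset.sum_congr rfl fun a _ => ?_
  have hdelta : (∏ y ∈ univ.erase x, (if σ y = i a y then (1:ℂ) else 0)) = 1 := by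
    refine Finset.prod_eq_one fun y hy => ?_
    rw [if_pos (hiy _ _ (Finset.mem_erase.mp hy).1).symm]
  have hprod : (∏ y, f y (i a y)) = f x a * ∏ y ∈ univ.erase x, f y (σ y) := by
    rw [← Finset.mul_prod_erase univ _ (Finset.mem_univ x), hix]
    congr 1
    exact Finset.prod_congr rfl fun y hy => by rw [hiy _ _ (Finset.mem_erase.mp hy).1]
  rw [hdelta, hix, hprod]
  ring

lemma kinkCell (c A : ℂ) (g h : Fin 2 → ℂ) (s t : Fin 2)
    (h1 : (1 - A) * (g 0 * h 1) = c * (g 1 * h 0))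
    (h2 : (1 + A) * (g 1 * h 0) = c * (g 0 * h 1)) :
    -(c * ((∑ a : Fin 2, S1 s a * g a) * (∑ b : Fin 2, S1 t b * h b)
         + (∑ a : Fin 2, S2 s a * g a) * (∑ b : Fin 2, S2 t b * h b)))
      - (∑ a : Fin 2, S3 s a * g a) * (∑ b : Fin 2, S3 t b * h b)
      + 1/4 * (g s * h t)
      - A/2 * ((∑ a : Fin 2, S3 s a * g a) * h t - (∑ b : Fin 2, S3 t b * h b) * g s)
    = 0 := by
  have hI := Complex.I_sq
  fin_cases s <;> fin_cases t <;>
    simp [S1, S2, S3, Fin.sum_univ_two, Matrix.cons_val_zero, Matrix.cons_val_one,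
      Matrix.head_cons]
  · linear_combination (-(c * g 1 * h 1 / 4)) * hI
  · linear_combination (c * g 1 * h 0 / 4) * hI + (1/2) * h1
  · linear_combination (c * g 0 * h 1 / 4) * hI + (1/2) * h2
  · linear_combination (-(c * g 0 * h 0 / 4)) * hI

set_option maxHeartbeats 1000000 in
/-- The kink product states `ψ(z) = ⊗_{x=1}^b χ_x(z)`,
`χ_x(z) = (|↑⟩ + z q^{-x}|↓⟩)/√(1+|z|²q^{-2x})` (sites `1,…,b`; here the 0-indexed
site `x` carries the paper's label `x+1`), are zero-energy ground states of the
spin-1/2 kink Hamiltonian: `H₀^{+-} ψ(z) = 0`, for `Δ > 1`, `0 < q < 1`,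
`q + q⁻¹ = 2Δ`, and every `z ∈ ℂ`. -/
theorem stmt18 (b : ℕ) (hb : 2 ≤ b) (Δ q : ℝ) (hΔ : 1 < Δ)
    (hq0 : 0 < q) (hq1 : q < 1) (hq : q + q⁻¹ = 2*Δ) (z : ℂ) :
    (Hkink b Δ).mulVec
      (fun σ : Fin b → Fin 2 => ∏ x : Fin b,
        (if σ x = 0 then 1 else z * ((q : ℂ) ^ ((x : ℕ) + 1))⁻¹) /
          ((Real.sqrt (1 + ‖z‖^2 * (q ^ (2*((x : ℕ) + 1)))⁻¹) : ℝ) : ℂ))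
    = 0 := by
  classical
  have hΔ0 : (0:ℝ) < Δ := lt_trans one_pos hΔ
  have hqne : q ≠ 0 := ne_of_gt hq0
  have hΔne : Δ ≠ 0 := ne_of_gt hΔ0
  have hq2 : q^2 + 1 = 2*Δ*q := by
    field_simp at hq; nlinarith [hq]
  have hA : Real.sqrt (1 - Δ⁻¹^2) = 1 - q/Δ := by
    have h1 : (1:ℝ) - Δ⁻¹^2 = (1 - q/Δ)^2 := by
      field_simp
      nlinarith [hq2]
    rw [h1, Real.sqrt_sq]
    have : q/Δ < 1 := (div_lt_one hΔ0).mpr (lt_trans hq1 hΔ)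
    linarith
  set f : Fin b → Fin 2 → ℂ := fun x s =>
    (if s = 0 then 1 else z * ((q : ℂ) ^ ((x : ℕ) + 1))⁻¹) /
      ((Real.sqrt (1 + ‖z‖^2 * (q ^ (2*((x : ℕ) + 1)))⁻¹) : ℝ) : ℂ) with hf
  show (Hkink b Δ).mulVec (fun τ : Fin b → Fin 2 => ∏ y : Fin b, f y (τ y)) = 0
  funext σ
  rw [Hkink, sum_mulVec', Finset.sum_apply, Pi.zero_apply]
  refine Finset.sum_eq_zero fun x _ => ?_
  have hx1 : x.1 + 1 < b := by have := Finset.mem_range.mp x.2; omega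
  have hx0 : x.1 < b := by omega
  set X : Fin b := ⟨x.1, hx0⟩ with hX
  set X' : Fin b := ⟨x.1+1, hx1⟩ with hX'
  have hXX : X ≠ X' := by
    simp [hX, hX', Fin.ext_iff]
  show ((-((Δ : ℂ)⁻¹ • (onSites b X X' S1 S1 + onSites b X X' S2 S2))
      - onSites b X X' S3 S3 + (1/4 : ℂ) • 1
      - ((Real.sqrt (1 - Δ⁻¹^2) : ℂ)/2) •
          (onSite b X S3 - onSite b X' S3)).mulVec
      (fun τ : Fin b → Fin 2 => ∏ y : Fin b, f y (τ y))) σ = 0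
  rw [Matrix.sub_mulVec, Matrix.add_mulVec, Matrix.sub_mulVec, Matrix.neg_mulVec,
      Matrix.smul_mulVec, Matrix.add_mulVec, Matrix.smul_mulVec,
      Matrix.one_mulVec, Matrix.smul_mulVec, Matrix.sub_mulVec]
  simp only [Pi.sub_apply, Pi.add_apply, Pi.neg_apply, Pi.smul_apply, smul_eq_mul]
  rw [mulVec_onSites X X' hXX S1 S1 f σ, mulVec_onSites X X' hXX S2 S2 f σ,
      mulVec_onSites X X' hXX S3 S3 f σ, mulVec_onSite X S3 f σ, mulVec_onSite X' S3 f σ]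
  have hX'mem : X' ∈ univ.erase X := Finset.mem_erase.mpr ⟨Ne.symm hXX, Finset.mem_univ _⟩
  have hXmem : X ∈ univ.erase X' := Finset.mem_erase.mpr ⟨hXX, Finset.mem_univ _⟩
  have e1 : (∏ y : Fin b, f y (σ y))
      = f X (σ X) * (f X' (σ X') * ∏ y ∈ (univ.erase X).erase X', f y (σ y)) := by
    rw [← Finset.mul_prod_erase univ _ (Finset.mem_univ X),
        ← Finset.mul_prod_erase (univ.erase X) _ hX'mem]
  have e2 : (∏ y ∈ univ.erase X, f y (σ y))
      = f X' (σ X') * ∏ y ∈ (univ.erase X).erase X', f y (σ y) :=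
    (Finset.mul_prod_erase (univ.erase X) _ hX'mem).symm
  have e3 : (∏ y ∈ univ.erase X', f y (σ y))
      = f X (σ X) * ∏ y ∈ (univ.erase X).erase X', f y (σ y) := by
    rw [← Finset.mul_prod_erase (univ.erase X') _ hXmem, Finset.erase_right_comm]
  rw [e1, e2, e3]
  have hqc : (q:ℂ) ≠ 0 := by exact_mod_cast hqne
  have hΔc : (Δ:ℂ) ≠ 0 := by exact_mod_cast hΔne
  have hrel : (q:ℂ)^2 + 1 = 2*(Δ:ℂ)*(q:ℂ) := by exact_mod_cast hq2
  have hN : ∀ n : ℕ, ((Real.sqrt (1 + ‖z‖^2 * (q ^ (2*(n+1)))⁻¹) : ℝ) : ℂ) ≠ 0 := by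
    intro n
    have : (0:ℝ) < Real.sqrt (1 + ‖z‖^2 * (q ^ (2*(n+1)))⁻¹) :=
      Real.sqrt_pos.mpr (by positivity)
    exact_mod_cast ne_of_gt this
  have hAc : ((Real.sqrt (1 - Δ⁻¹^2) : ℝ) : ℂ) = 1 - (q:ℂ)/(Δ:ℂ) := by
    rw [hA]; push_cast; ring
  rw [hAc]
  set Nx : ℂ := ((Real.sqrt (1 + ‖z‖^2 * (q ^ (2*(x.1 + 1)))⁻¹) : ℝ) : ℂ) with hNx
  set Ny : ℂ := ((Real.sqrt (1 + ‖z‖^2 * (q ^ (2*(x.1 + 1 + 1)))⁻¹) : ℝ) : ℂ) with hNy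
  have u0 : f X 0 = 1 / Nx := rfl
  have u1 : f X 1 = z * ((q:ℂ)^(x.1+1))⁻¹ / Nx := rfl
  have v0 : f X' 0 = 1 / Ny := rfl
  have v1 : f X' 1 = z * ((q:ℂ)^(x.1+1+1))⁻¹ / Ny := rfl
  have hP1 : ((q:ℂ)^(x.1+1)) ≠ 0 := pow_ne_zero _ hqc
  have hP2 : ((q:ℂ)^(x.1+1+1)) ≠ 0 := pow_ne_zero _ hqc
  have hS1' : ((q:ℂ)/(Δ:ℂ)) * (z * ((q:ℂ)^(x.1+1+1))⁻¹)
      = ((Δ:ℂ))⁻¹ * (z * ((q:ℂ)^(x.1+1))⁻¹) := by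
    field_simp
    ring
  have hS2' : (2 - (q:ℂ)/(Δ:ℂ)) * (z * ((q:ℂ)^(x.1+1))⁻¹)
      = ((Δ:ℂ))⁻¹ * (z * ((q:ℂ)^(x.1+1+1))⁻¹) := by
    field_simp
    linear_combination (-z * (q:ℂ)^(x.1+1)) * hrel
  have h1 : (1 - (1 - (q:ℂ)/(Δ:ℂ))) * (f X 0 * f X' 1)
      = ((Δ:ℂ))⁻¹ * (f X 1 * f X' 0) := by
    rw [u0, u1, v0, v1]
    linear_combination ((1/Nx) * (1/Ny)) * hS1'
  have h2 : (1 + (1 - (q:ℂ)/(Δ:ℂ))) * (f X 1 * f X' 0)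
      = ((Δ:ℂ))⁻¹ * (f X 0 * f X' 1) := by
    rw [u0, u1, v0, v1]
    linear_combination ((1/Nx) * (1/Ny)) * hS2'
  generalize (∏ y ∈ (univ.erase X).erase X', f y (σ y)) = R
  generalize hs : σ X = s
  generalize ht : σ X' = t
  linear_combination R * kinkCell ((Δ:ℂ))⁻¹ (1 - (q:ℂ)/(Δ:ℂ)) (f X) (f X') s t h1 h2
end
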